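/- arXiv:math/0207133 — 4 statements merged into one kernel-verified Lean document; each statement's English description precedes it below -/
import Mathlib

section
/- Let T: ℝ² → ℝ² be continuous satisfying T_φ(φ+1,I) = T_φ(φ,I)+1, T_φ(φ,I+1) = T_φ(φ,I)+1, T_I(φ+1,I) = T_I(φ,I), T_I(φ,I+1) = T_I(φ,I)+1. If w ∈ ℝ² satisfies p₂(Tⁿ(w)) → +∞ as n → ∞, then (p₁(Tⁿ(w)) − p₁(w))/n → +∞ as n → ∞. -/
open Filter Finset Topology

/-- Cesàro averages of a sequence tending to `+∞` tend to `+∞`. -/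
lemma cesaro_atTop_aux {a : ℕ → ℝ} (ha : Tendsto a atTop atTop) :
    Tendsto (fun n : ℕ => (∑ k ∈ Finset.range n, a k) / n) atTop atTop := by
  rw [tendsto_atTop]
  intro b
  have hmin : Tendsto (fun n => min (a n) (b + 1)) atTop (𝓝 (b + 1)) := by
    have hev : ∀ᶠ n in atTop, min (a n) (b + 1) = b + 1 := by
      filter_upwards [ha.eventually_ge_atTop (b + 1)] with n hn
      exact min_eq_right hn
    have hev' : (fun n => min (a n) (b + 1)) =ᶠ[atTop] fun _ => b + 1 := hev
    exact Tendsto.congr' hev'.symm tendsto_const_nhds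
  have hc := hmin.cesaro
  have hgt := hc.eventually (eventually_gt_nhds (show b < b + 1 by linarith))
  filter_upwards [hgt, eventually_ge_atTop 1] with n hn hn1
  have hnpos : (0 : ℝ) < n := by exact_mod_cast hn1
  have hsum : (∑ k ∈ range n, min (a k) (b + 1)) ≤ ∑ k ∈ range n, a k :=
    Finset.sum_le_sum fun k _ => min_le_left _ _
  calc b ≤ (↑n)⁻¹ * ∑ k ∈ range n, min (a k) (b + 1) := hn.le
    _ ≤ (↑n)⁻¹ * ∑ k ∈ range n, a k := by
        have : (0:ℝ) ≤ (↑n)⁻¹ := by positivity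
        exact mul_le_mul_of_nonneg_left hsum this
    _ = (∑ k ∈ range n, a k) / n := (div_eq_inv_mul _ _).symm

/-- If the vertical coordinate of the orbit of `w` under a lift `T` of a torus
map homotopic to the Dehn twist tends to `+∞`, then the horizontal rotation
number is `+∞`. -/
theorem vertical_atTop_implies_horizontal_atTop
    (T : ℝ × ℝ → ℝ × ℝ) (hT : Continuous T)
    (hper1 : ∀ z : ℝ × ℝ, T (z + (1, 0)) = T z + (1, 0))
    (hper2 : ∀ z : ℝ × ℝ, T (z + (0, 1)) = T z + (1, 1))
    (w : ℝ × ℝ)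
    (hw : Tendsto (fun n : ℕ => (T^[n] w).2) atTop atTop) :
    Tendsto (fun n : ℕ => ((T^[n] w).1 - w.1) / (n : ℝ)) atTop atTop := by
  set h : ℝ × ℝ → ℝ := fun z => (T z).1 - z.1 - z.2 with hh
  have hcont : Continuous h :=
    ((continuous_fst.comp hT).sub continuous_fst).sub continuous_snd
  have hp1 : Function.Periodic h (1, 0) := by
    intro z
    simp only [hh, hper1 z, Prod.fst_add, Prod.snd_add]
    ring
  have hp2 : Function.Periodic h (0, 1) := by
    intro z
    simp only [hh, hper2 z, Prod.fst_add, Prod.snd_add]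
    ring
  -- invariance under integer translations
  have hshift : ∀ (m n : ℤ) (z : ℝ × ℝ), h (z + ((m : ℝ), (n : ℝ))) = h z := by
    intro m n z
    have e1 : (m : ℤ) • ((1 : ℝ), (0 : ℝ)) = ((m : ℝ), (0 : ℝ)) := by
      simp [Prod.smul_mk]
    have e2 : (n : ℤ) • ((0 : ℝ), (1 : ℝ)) = ((0 : ℝ), (n : ℝ)) := by
      simp [Prod.smul_mk]
    have : z + ((m : ℝ), (n : ℝ)) = (z + m • ((1:ℝ), (0:ℝ))) + n • ((0:ℝ), (1:ℝ)) := by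
      rw [e1, e2, add_assoc]
      simp [Prod.ext_iff]
    rw [this, (hp2.zsmul n) _, (hp1.zsmul m) _]
  -- h is bounded below by its minimum on the unit square
  obtain ⟨c, hcmem, hcmin⟩ :=
    (isCompact_Icc (a := ((0:ℝ), (0:ℝ))) (b := ((1:ℝ), (1:ℝ)))).exists_isMinOn
      ⟨((0:ℝ), (0:ℝ)), by simp [Prod.le_def]⟩ hcont.continuousOn
  have hlow : ∀ z, h c ≤ h z := by
    intro z
    have hzdec : z = (Int.fract z.1, Int.fract z.2) + ((⌊z.1⌋ : ℝ), (⌊z.2⌋ : ℝ)) := by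
      ext
      · exact (Int.fract_add_floor z.1).symm
      · exact (Int.fract_add_floor z.2).symm
    have hz : h z = h (Int.fract z.1, Int.fract z.2) := by
      conv_lhs => rw [hzdec]
      exact hshift _ _ _
    rw [hz]
    refine hcmin ?_
    constructor
    · exact ⟨Int.fract_nonneg _, Int.fract_nonneg _⟩
    · exact ⟨(Int.fract_lt_one _).le, (Int.fract_lt_one _).le⟩
  -- increments of the first coordinate
  set a : ℕ → ℝ := fun k => (T^[k + 1] w).1 - (T^[k] w).1 with hha
  have hak : ∀ k, (T^[k] w).2 + h c ≤ a k := by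
    intro k
    have : a k = h (T^[k] w) + (T^[k] w).2 := by
      simp only [hha, Function.iterate_succ_apply', hh]
      ring
    rw [this]
    have := hlow (T^[k] w)
    linarith
  have ha : Tendsto a atTop atTop :=
    tendsto_atTop_mono hak (tendsto_atTop_add_const_right _ _ hw)
  have htel : ∀ n : ℕ, (T^[n] w).1 - w.1 = ∑ k ∈ range n, a k := by
    intro n
    rw [Finset.sum_range_sub (f := fun k => (T^[k] w).1)]
    simp
  have := cesaro_atTop_aux ha
  refine this.congr fun n => ?_
  rw [htel n]
end

section
/- Let T ∈ TQ (a lift of a twist torus diffeomorphism with the periodicity T(φ+1,I)=T(φ,I)+(1,0), T(φ,I+1)=T(φ,I)+(1,1)) and suppose z ∈ ℝ² has a rotation vector ρ(z,T) = lim (Tⁿ(z)−z)/n in (ℝ ∪ {±∞})². Then either ρ(z,T) = (ω, 0) for some ω ∈ ℝ, or ρ(z,T) = (±∞, ω) for some ω ∈ ℝ; in particular, it is impossible that both coordinates are finite with the second nonzero. -/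
/-!
The periodicity relations make `(T w).1 - w.1 - w.2` and `(T w).2 - w.2` descend to the torus, so
they are bounded. Writing `(xₙ, yₙ) = Tⁿ z`, the vertical steps are therefore bounded, which makes
`ρ₂` finite, and the horizontal step is the height up to a bounded error:
`yₙ = xₙ₊₁ - xₙ + O(1)`. If `xₙ / n` converges to a finite limit, then `(xₙ₊₁ - xₙ) / n → 0`,
hence `yₙ / n → 0` and `ρ₂ = 0`.
-/

open Filter Topology

theorem exists_norm_le_of_continuous_of_periodic₂ {E : Type*} [NormedAddCommGroup E]
    {f : ℝ × ℝ → E} (hf : Continuous f) (h₁ : ∀ w, f (w + (1, 0)) = f w)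
    (h₂ : ∀ w, f (w + (0, 1)) = f w) : ∃ C, ∀ w, ‖f w‖ ≤ C := by
  obtain ⟨C, hC⟩ := (isCompact_Icc.prod isCompact_Icc).exists_bound_of_continuousOn
    (s := Set.Icc (0 : ℝ) 1 ×ˢ Set.Icc (0 : ℝ) 1) hf.continuousOn
  refine ⟨C, fun ⟨x, y⟩ => ?_⟩
  have hx : Function.Periodic (fun s => f (s, y)) 1 := fun s => by simpa using h₁ (s, y)
  have hy : Function.Periodic (fun t => f (Int.fract x, t)) 1 := fun t => by
    simpa using h₂ (Int.fract x, t)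
  have hfract : f (Int.fract x, Int.fract y) = f (x, y) := by
    have hfx := hx.sub_int_mul_eq (x := x) ⌊x⌋
    have hfy := hy.sub_int_mul_eq (x := y) ⌊y⌋
    simp only [mul_one, Int.self_sub_floor] at hfx hfy
    rw [hfy, hfx]
  rw [← hfract]
  exact hC _ ⟨⟨Int.fract_nonneg x, (Int.fract_lt_one x).le⟩,
    ⟨Int.fract_nonneg y, (Int.fract_lt_one y).le⟩⟩

theorem abs_sub_div_le_of_abs_sub_succ_le {y : ℕ → ℝ} {C : ℝ}
    (h : ∀ n, |y (n + 1) - y n| ≤ C) (n : ℕ) : |(y n - y 0) / n| ≤ C := by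
  rcases n.eq_zero_or_pos with rfl | hn
  · simpa using (abs_nonneg _).trans (h 0)
  have hsum : dist (y 0) (y n) ≤ ∑ _i ∈ Finset.range n, C :=
    dist_le_range_sum_of_dist_le n fun _ => by rw [dist_comm]; exact h _
  rw [Finset.sum_const, Finset.card_range, nsmul_eq_mul, Real.dist_eq, abs_sub_comm] at hsum
  rw [abs_div, Nat.abs_cast, div_le_iff₀ (by exact_mod_cast hn)]
  linarith

theorem EReal.exists_eq_coe_of_tendsto_of_abs_le {α : Type*} {l : Filter α} [l.NeBot]
    {v : α → ℝ} {C : ℝ} {ρ : EReal} (hv : ∀ a, |v a| ≤ C)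
    (h : Tendsto (fun a => (v a : EReal)) l (𝓝 ρ)) : ∃ ω : ℝ, ρ = ω := by
  have hρ : ρ ∈ Set.Icc ((-C : ℝ) : EReal) C :=
    isClosed_Icc.mem_of_tendsto h (Eventually.of_forall fun a =>
      ⟨EReal.coe_le_coe_iff.2 (neg_le_of_abs_le (hv a)),
        EReal.coe_le_coe_iff.2 (le_of_abs_le (hv a))⟩)
  exact ⟨ρ.toReal, (EReal.coe_toReal (hρ.2.trans_lt (EReal.coe_lt_top C)).ne
    ((EReal.bot_lt_coe _).trans_le hρ.1).ne').symm⟩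

theorem tendsto_sub_succ_div_natCast_of_tendsto {u : ℕ → ℝ} {r : ℝ}
    (hu : Tendsto (fun n => u n / n) atTop (𝓝 r)) :
    Tendsto (fun n => (u (n + 1) - u n) / n) atTop (𝓝 0) := by
  have hsucc : Tendsto (fun n : ℕ => u (n + 1) / (n + 1 : ℕ) * ((n : ℝ) / (n + 1))⁻¹)
      atTop (𝓝 (r * 1⁻¹)) :=
    ((tendsto_add_atTop_iff_nat 1).2 hu).mul ((tendsto_natCast_div_add_atTop 1).inv₀ one_ne_zero)
  rw [← sub_self r]
  nth_rewrite 1 [← mul_one r, ← inv_one]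
  refine (hsucc.sub hu).congr' ?_
  filter_upwards [eventually_ne_atTop 0] with n hn
  field_simp
  push_cast
  ring

theorem tendsto_div_natCast_zero_of_abs_sub_succ_sub_le {x y : ℕ → ℝ} {C r : ℝ}
    (hstep : ∀ n, |x (n + 1) - x n - y n| ≤ C)
    (hx : Tendsto (fun n => (x n - x 0) / n) atTop (𝓝 r)) :
    Tendsto (fun n => (y n - y 0) / n) atTop (𝓝 0) := by
  have hdiff := tendsto_sub_succ_div_natCast_of_tendsto hx
  have herr : Tendsto (fun n : ℕ => (x (n + 1) - x n - y n) / n) atTop (𝓝 0) := by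
    refine squeeze_zero_norm (fun n => ?_) (tendsto_const_div_atTop_nhds_zero_nat C)
    rw [Real.norm_eq_abs, abs_div, Nat.abs_cast]
    exact div_le_div_of_nonneg_right (hstep n) n.cast_nonneg
  have hlim := (hdiff.sub herr).sub (tendsto_const_div_atTop_nhds_zero_nat (y 0))
  simp only [sub_zero] at hlim
  refine hlim.congr fun n => ?_
  ring

theorem rotation_vector_dichotomy_general
    (T : ℝ × ℝ → ℝ × ℝ) (hT : Continuous T)
    (hper1 : ∀ z : ℝ × ℝ, T (z + (1, 0)) = T z + (1, 0))
    (hper2 : ∀ z : ℝ × ℝ, T (z + (0, 1)) = T z + (1, 1))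
    (z : ℝ × ℝ) (ρ₁ ρ₂ : EReal)
    (h1 : Tendsto (fun n : ℕ => ((((T^[n] z).1 - z.1) / (n : ℝ) : ℝ) : EReal))
            atTop (nhds ρ₁))
    (h2 : Tendsto (fun n : ℕ => ((((T^[n] z).2 - z.2) / (n : ℝ) : ℝ) : EReal))
            atTop (nhds ρ₂)) :
    (∃ ω : ℝ, ρ₁ = (ω : EReal) ∧ ρ₂ = 0) ∨
    (∃ ω : ℝ, (ρ₁ = ⊤ ∨ ρ₁ = ⊥) ∧ ρ₂ = (ω : EReal)) := by
  obtain ⟨C₁, hC₁⟩ := exists_norm_le_of_continuous_of_periodic₂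
    (f := fun w => (T w).1 - w.1 - w.2) (by fun_prop)
    (fun w => by simp [hper1]) (fun w => by simp [hper2]; ring)
  obtain ⟨C₂, hC₂⟩ := exists_norm_le_of_continuous_of_periodic₂
    (f := fun w => (T w).2 - w.2) (by fun_prop)
    (fun w => by simp [hper1]) (fun w => by simp [hper2])
  have hstep₁ (n : ℕ) : |(T^[n + 1] z).1 - (T^[n] z).1 - (T^[n] z).2| ≤ C₁ := by
    rw [Function.iterate_succ_apply']; exact hC₁ _
  have hstep₂ (n : ℕ) : |(T^[n + 1] z).2 - (T^[n] z).2| ≤ C₂ := by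
    rw [Function.iterate_succ_apply']; exact hC₂ _
  obtain ⟨ω, rfl⟩ := EReal.exists_eq_coe_of_tendsto_of_abs_le
    (abs_sub_div_le_of_abs_sub_succ_le (y := fun n => (T^[n] z).2) hstep₂) h2
  induction ρ₁ using EReal.rec with
  | bot => exact .inr ⟨ω, .inr rfl, rfl⟩
  | top => exact .inr ⟨ω, .inl rfl, rfl⟩
  | coe r =>
    have hω := tendsto_div_natCast_zero_of_abs_sub_succ_sub_le hstep₁ (EReal.tendsto_coe.1 h1)
    exact .inl ⟨r, rfl, congrArg _ (tendsto_nhds_unique (EReal.tendsto_coe.1 h2) hω)⟩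

/-- Dichotomy for rotation vectors of a twist lift `T ∈ TQ`: if the rotation
vector of `z` exists in `(ℝ ∪ {±∞})²`, then either it equals `(ω, 0)` with
`ω ∈ ℝ`, or it equals `(±∞, ω)` with `ω ∈ ℝ`. -/
theorem rotation_vector_dichotomy
    (T : ℝ × ℝ → ℝ × ℝ) (hT : Continuous T)
    (hper1 : ∀ z : ℝ × ℝ, T (z + (1, 0)) = T z + (1, 0))
    (hper2 : ∀ z : ℝ × ℝ, T (z + (0, 1)) = T z + (1, 1))
    (htwist : ∀ φ : ℝ, StrictMono fun I : ℝ => (T (φ, I)).1)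
    (z : ℝ × ℝ) (ρ₁ ρ₂ : EReal)
    (h1 : Tendsto (fun n : ℕ => ((((T^[n] z).1 - z.1) / (n : ℝ) : ℝ) : EReal))
            atTop (nhds ρ₁))
    (h2 : Tendsto (fun n : ℕ => ((((T^[n] z).2 - z.2) / (n : ℝ) : ℝ) : EReal))
            atTop (nhds ρ₂)) :
    (∃ ω : ℝ, ρ₁ = (ω : EReal) ∧ ρ₂ = 0) ∨
    (∃ ω : ℝ, (ρ₁ = ⊤ ∨ ρ₁ = ⊥) ∧ ρ₂ = (ω : EReal)) :=
  rotation_vector_dichotomy_general T hT hper1 hper2 z ρ₁ ρ₂ h1 h2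
end

section
/- Let γ: [α, β] → ℝ² be a continuous curve and T: ℝ² → ℝ² a C¹ map whose first coordinate T_φ satisfies |∂T_φ/∂φ| < b and ∂T_φ/∂I ≥ K > 0 everywhere. If sup_{t,s ∈ [α,β]} |p₁(γ(t)) − p₁(γ(s))| < 1 and |p₂(γ(β)) − p₂(γ(α))| > (2+b)/K, then sup_{t,s ∈ [α,β]} |p₁(T∘γ(t)) − p₁(T∘γ(s))| ≥ 2; consequently, for every φ₀ ∈ ℝ there exists s ∈ ℤ with φ₀ + s ∈ p₁(T∘γ([α,β])). -/
/-!
By the mean value theorem along the chord from `γ α` to `γ β`, the change of `T_φ` between the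
endpoints is `ℓ (Δφ, ΔI)` for some derivative `ℓ = D T_φ(c)`. Its twist part `ΔI · ∂_I T_φ`
exceeds `2 + b` in absolute value, while `|Δφ · ∂_φ T_φ| < b`, so the endpoints' images are at
least `2` apart horizontally. A connected set of reals of diameter at least `1` meets every coset
`φ₀ + ℤ`.
-/

open Set
open scoped Interval

theorem ContinuousLinearMap.apply_prod_eq (ℓ : ℝ × ℝ →L[ℝ] ℝ) (v : ℝ × ℝ) :
    ℓ v = v.1 * ℓ (1, 0) + v.2 * ℓ (0, 1) := by
  have hv : v = v.1 • ((1 : ℝ), (0 : ℝ)) + v.2 • ((0 : ℝ), (1 : ℝ)) := by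
    ext <;> simp
  conv_lhs => rw [hv, map_add, map_smul, map_smul]
  rfl

theorem two_lt_abs_apply_of_twist {b K : ℝ} (hK : 0 < K) (ℓ : ℝ × ℝ →L[ℝ] ℝ)
    (hb : |ℓ (1, 0)| < b) (htwist : K ≤ ℓ (0, 1)) {v : ℝ × ℝ}
    (hv₁ : |v.1| < 1) (hv₂ : (2 + b) / K < |v.2|) :
    2 < |ℓ v| := by
  have hshear : |v.1 * ℓ (1, 0)| < b := by
    rw [abs_mul]
    calc |v.1| * |ℓ (1, 0)| ≤ 1 * |ℓ (1, 0)| := by gcongr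
      _ < b := by rwa [one_mul]
  have htwisted : 2 + b < |v.2 * ℓ (0, 1)| := by
    rw [abs_mul]
    calc 2 + b = (2 + b) / K * K := by field_simp
      _ < |v.2| * K := by gcongr
      _ ≤ |v.2| * |ℓ (0, 1)| := by gcongr; exact htwist.trans (le_abs_self _)
  have := abs_sub_abs_le_abs_add (v.2 * ℓ (0, 1)) (v.1 * ℓ (1, 0))
  rw [ℓ.apply_prod_eq, add_comm]
  linarith

theorem IsPreconnected.exists_int_add_mem_image {α : Type*} [TopologicalSpace α] {s : Set α}
    (hs : IsPreconnected s) {f : α → ℝ} (hf : ContinuousOn f s) {u v : α} (hu : u ∈ s)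
    (hv : v ∈ s) (huv : 1 ≤ |f u - f v|) (x : ℝ) :
    ∃ n : ℤ, x + n ∈ f '' s := by
  have hsub : [[f u, f v]] ⊆ f '' s :=
    (isPreconnected_iff_ordConnected.1 (hs.image f hf)).uIcc_subset
      (mem_image_of_mem f hu) (mem_image_of_mem f hv)
  have hwidth : min (f u) (f v) + 1 ≤ max (f u) (f v) := by
    linarith [max_sub_min_eq_abs' (f u) (f v)]
  refine ⟨⌈min (f u) (f v) - x⌉, hsub ⟨?_, ?_⟩⟩
  · linarith [Int.le_ceil (min (f u) (f v) - x)]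
  · linarith [Int.ceil_lt_add_one (min (f u) (f v) - x)]

theorem twist_stretches_curve_general
    (T : ℝ × ℝ → ℝ × ℝ)
    (L : ℝ × ℝ → (ℝ × ℝ →L[ℝ] ℝ))
    (hdiff : ∀ p : ℝ × ℝ, HasFDerivAt (fun q : ℝ × ℝ => (T q).1) (L p) p)
    (b K : ℝ) (hK : 0 < K)
    (hb : ∀ p : ℝ × ℝ, |L p (1, 0)| < b)
    (htwist : ∀ p : ℝ × ℝ, K ≤ L p (0, 1))
    (α β : ℝ) (hαβ : α ≤ β)
    (γ : ℝ → ℝ × ℝ) (hγ : ContinuousOn γ (Icc α β))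
    (hosc : ∀ t ∈ Icc α β, ∀ s ∈ Icc α β, |(γ t).1 - (γ s).1| < 1)
    (hvert : |(γ β).2 - (γ α).2| > (2 + b) / K) :
    (∃ t ∈ Icc α β, ∃ s ∈ Icc α β, |(T (γ t)).1 - (T (γ s)).1| ≥ 2) ∧
    ∀ φ₀ : ℝ, ∃ s : ℤ, φ₀ + (s : ℝ) ∈ (fun t => (T (γ t)).1) '' Icc α β := by
  have hα : α ∈ Icc α β := left_mem_Icc.2 hαβ
  have hβ : β ∈ Icc α β := right_mem_Icc.2 hαβ
  obtain ⟨c, -, hmvt⟩ := domain_mvt (fun p _ => (hdiff p).hasFDerivWithinAt) convex_univ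
    (mem_univ (γ α)) (mem_univ (γ β))
  have hstretch : 2 ≤ |(T (γ β)).1 - (T (γ α)).1| := by
    rw [hmvt]
    exact (two_lt_abs_apply_of_twist hK (L c) (hb c) (htwist c) (hosc β hβ α hα) hvert).le
  have hcont : Continuous fun q : ℝ × ℝ => (T q).1 :=
    continuous_iff_continuousAt.2 fun p => (hdiff p).continuousAt
  exact ⟨⟨β, hβ, α, hα, hstretch⟩, isPreconnected_Icc.exists_int_add_mem_image
    (hcont.comp_continuousOn hγ) hβ hα (by linarith)⟩

/-- Claim 1: a curve with small horizontal extent and large vertical extent is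
stretched horizontally by a twist map, so its image crosses an integer
translate of any vertical line. -/
theorem twist_stretches_curve
    (T : ℝ × ℝ → ℝ × ℝ) (hT : Continuous T)
    (L : ℝ × ℝ → (ℝ × ℝ →L[ℝ] ℝ))
    (hdiff : ∀ p : ℝ × ℝ, HasFDerivAt (fun q : ℝ × ℝ => (T q).1) (L p) p)
    (b K : ℝ) (hK : 0 < K)
    (hb : ∀ p : ℝ × ℝ, |L p (1, 0)| < b)
    (htwist : ∀ p : ℝ × ℝ, K ≤ L p (0, 1))
    (α β : ℝ) (hαβ : α ≤ β)
    (γ : ℝ → ℝ × ℝ) (hγ : ContinuousOn γ (Icc α β))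
    (hosc : ∀ t ∈ Icc α β, ∀ s ∈ Icc α β, |(γ t).1 - (γ s).1| < 1)
    (hvert : |(γ β).2 - (γ α).2| > (2 + b) / K) :
    (∃ t ∈ Icc α β, ∃ s ∈ Icc α β, |(T (γ t)).1 - (T (γ s)).1| ≥ 2) ∧
    ∀ φ₀ : ℝ, ∃ s : ℤ, φ₀ + (s : ℝ) ∈ (fun t => (T (γ t)).1) '' Icc α β :=
  twist_stretches_curve_general T L hdiff b K hK hb htwist α β hαβ γ hγ hosc hvert
end

section
/- Let f̂: S¹×ℝ → S¹×ℝ be a homeomorphism of the open cylinder lifting a torus homeomorphism homotopic to [[1,1],[0,1]], and suppose there exist l > 0 and a homotopically nontrivial simple closed curve γ̂ ⊂ S¹×ℝ with f̂^l-invariant image after choosing the lift F̂₀ of the l-th power fixing γ̂. Then for this lift, every point z has vertical rotation number ρ_V(F̂₀, z) = lim (p₂(F̂₀ⁿ(ẑ)) − p₂(ẑ))/n equal to 0 whenever the limit exists; consequently the original map cannot simultaneously possess a periodic orbit with ρ_V ≠ 0 and one with ρ_V = 0. -/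
/-!
Write `h(x, y) = y - ψ x` for the height above the invariant graph. Since `F` commutes with the
vertical deck translation up to a horizontal shift by `l` and `ψ` is `1`-periodic, every integer
level set `{h = k}` is mapped onto itself by `F`. By injectivity no other point is sent to an
integer level, so by connectedness each closed strip `{k ≤ h ≤ k + 1}` is forward invariant.
An orbit therefore has bounded height, and as `ψ` is bounded its vertical displacement is bounded,
which forces the vertical rotation number to vanish.
-/

open Filter Set Function

noncomputable section

def heightOver (ψ : ℝ → ℝ) (p : ℝ × ℝ) : ℝ := p.2 - ψ p.1

section heightOver

variable {ψ : ℝ → ℝ}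

theorem continuous_heightOver (hψ : Continuous ψ) : Continuous (heightOver ψ) :=
  continuous_snd.sub (hψ.comp continuous_fst)

theorem heightOver_eq_zero_iff {p : ℝ × ℝ} : heightOver ψ p = 0 ↔ p.2 = ψ p.1 :=
  sub_eq_zero

@[simp]
theorem heightOver_mk_add (x c : ℝ) : heightOver ψ (x, ψ x + c) = c := by
  simp [heightOver]

theorem isPreconnected_preimage_heightOver (hψ : Continuous ψ) {I : Set ℝ}
    (hI : IsPreconnected I) : IsPreconnected (heightOver ψ ⁻¹' I) := by
  have hgraph : heightOver ψ ⁻¹' I = (fun q : ℝ × ℝ => (q.1, ψ q.1 + q.2)) '' (univ ×ˢ I) := by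
    ext p
    refine ⟨fun hp => ⟨(p.1, heightOver ψ p), ⟨trivial, hp⟩, ?_⟩, ?_⟩
    · simp [heightOver]
    · rintro ⟨q, ⟨-, hq⟩, rfl⟩
      simpa using hq
  rw [hgraph]
  exact (isPreconnected_univ.prod hI).image _
    (continuous_fst.prodMk ((hψ.comp continuous_fst).add continuous_snd)).continuousOn

theorem heightOver_add_zsmul (hψ : Periodic ψ 1) (p : ℝ × ℝ) (a k : ℤ) :
    heightOver ψ (p + k • ((a : ℝ), (1 : ℝ))) = heightOver ψ p + k := by
  have hshift : ψ (p.1 + k * a) = ψ p.1 := by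
    simpa using hψ.int_mul (k * a) p.1
  simp only [heightOver, Prod.smul_mk, Prod.fst_add, Prod.snd_add, zsmul_eq_mul, mul_one]
  rw [hshift]
  ring

end heightOver

section invariantGraph

variable {F : ℝ × ℝ → ℝ × ℝ} {ψ : ℝ → ℝ} {l : ℤ}

theorem map_add_zsmul_of_map_add_one (hper : ∀ z : ℝ × ℝ, F (z + (0, 1)) = F z + ((l : ℝ), 1))
    (z : ℝ × ℝ) (k : ℤ) : F (z + k • ((0 : ℝ), (1 : ℝ))) = F z + k • ((l : ℝ), (1 : ℝ)) :=
  AddConstMapClass.map_add_zsmul (⟨F, hper⟩ : AddConstMap (ℝ × ℝ) (ℝ × ℝ) _ _) z k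

theorem heightOver_add_zsmul_vertical (p : ℝ × ℝ) (k : ℤ) :
    heightOver ψ (p + k • ((0 : ℝ), (1 : ℝ))) = heightOver ψ p + k := by
  simp only [heightOver, Prod.smul_mk, Prod.fst_add, Prod.snd_add, smul_zero, add_zero,
    zsmul_eq_mul, mul_one]
  ring

variable (hper : ∀ z : ℝ × ℝ, F (z + (0, 1)) = F z + ((l : ℝ), 1)) (hψ : Periodic ψ 1)
  (hinv : F '' {p : ℝ × ℝ | p.2 = ψ p.1} = {p : ℝ × ℝ | p.2 = ψ p.1})
include hper hψ hinv

theorem heightOver_map_of_eq_int {p : ℝ × ℝ} {k : ℤ} (hp : heightOver ψ p = k) :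
    heightOver ψ (F p) = k := by
  set q := p - k • ((0 : ℝ), (1 : ℝ))
  have hpq : p = q + k • ((0 : ℝ), (1 : ℝ)) := (sub_add_cancel _ _).symm
  have hq : heightOver ψ q = 0 := by
    rw [hpq, heightOver_add_zsmul_vertical] at hp
    linarith
  have hFq : F q ∈ {p : ℝ × ℝ | p.2 = ψ p.1} :=
    hinv ▸ mem_image_of_mem F (heightOver_eq_zero_iff.1 hq)
  rw [hpq, map_add_zsmul_of_map_add_one hper, heightOver_add_zsmul hψ,
    heightOver_eq_zero_iff.2 hFq, zero_add]

theorem exists_map_eq_of_heightOver_eq_int {w : ℝ × ℝ} {k : ℤ} (hw : heightOver ψ w = k) :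
    ∃ p, heightOver ψ p = k ∧ F p = w := by
  set q := w - k • ((l : ℝ), (1 : ℝ))
  have hwq : w = q + k • ((l : ℝ), (1 : ℝ)) := (sub_add_cancel _ _).symm
  have hq : q ∈ F '' {p : ℝ × ℝ | p.2 = ψ p.1} := by
    rw [hinv]
    refine heightOver_eq_zero_iff.1 ?_
    rw [hwq, heightOver_add_zsmul hψ] at hw
    linarith
  obtain ⟨c, hc, hFc⟩ := hq
  refine ⟨c + k • ((0 : ℝ), (1 : ℝ)), ?_, ?_⟩
  · rw [heightOver_add_zsmul_vertical, heightOver_eq_zero_iff.2 hc, zero_add]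
  · rw [map_add_zsmul_of_map_add_one hper, hFc, hwq]

theorem heightOver_map_eq_int_iff (hinj : Injective F) {p : ℝ × ℝ} {k : ℤ} :
    heightOver ψ (F p) = k ↔ heightOver ψ p = k := by
  refine ⟨fun hFp => ?_, heightOver_map_of_eq_int hper hψ hinv⟩
  obtain ⟨q, hq, hFq⟩ := exists_map_eq_of_heightOver_eq_int hper hψ hinv hFp
  rwa [← hinj hFq]

theorem int_mem_of_mem_uIcc_heightOver_map (hF : Continuous F) (hinj : Injective F)
    (hψc : Continuous ψ) {I : Set ℝ} (hI : IsPreconnected I) {a b : ℤ} (ha : (a : ℝ) ∈ I)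
    {p : ℝ × ℝ} (hp : heightOver ψ p ∈ I) (hb : (b : ℝ) ∈ uIcc (a : ℝ) (heightOver ψ (F p))) :
    (b : ℝ) ∈ I := by
  have hT : IsPreconnected ((heightOver ψ ∘ F) '' (heightOver ψ ⁻¹' I)) :=
    (isPreconnected_preimage_heightOver hψc hI).image _
      ((continuous_heightOver hψc).comp hF).continuousOn
  have haT : (a : ℝ) ∈ (heightOver ψ ∘ F) '' (heightOver ψ ⁻¹' I) :=
    ⟨(0, ψ 0 + a), by simpa using ha, heightOver_map_of_eq_int hper hψ hinv (heightOver_mk_add 0 _)⟩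
  obtain ⟨q, hq, hFq⟩ := hT.ordConnected.uIcc_subset haT ⟨p, hp, rfl⟩ hb
  rwa [mem_preimage, (heightOver_map_eq_int_iff hper hψ hinv hinj).1 hFq] at hq

theorem mapsTo_heightOver_preimage_Icc (hF : Continuous F) (hinj : Injective F)
    (hψc : Continuous ψ) (m : ℤ) :
    MapsTo F (heightOver ψ ⁻¹' Icc (m : ℝ) (m + 1)) (heightOver ψ ⁻¹' Icc (m : ℝ) (m + 1)) := by
  intro p hp
  have hcast : ((m + 1 : ℤ) : ℝ) = m + 1 := by push_cast; rfl
  constructor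
  · rcases hp.1.eq_or_lt with hm | hm
    · exact (heightOver_map_of_eq_int hper hψ hinv hm.symm).ge
    · by_contra! hlt
      have hmem := int_mem_of_mem_uIcc_heightOver_map hper hψ hinv hF hinj hψc
        isPreconnected_Ioc (a := m + 1) (b := m)
        (by rw [hcast]; exact right_mem_Ioc.2 (lt_add_one _)) ⟨hm, hp.2⟩
        (mem_uIcc.2 (Or.inr ⟨hlt.le, by rw [hcast]; exact (lt_add_one _).le⟩))
      exact left_notMem_Ioc hmem
  · rcases hp.2.eq_or_lt with hm | hm
    · rw [← hcast] at hm ⊢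
      exact (heightOver_map_of_eq_int hper hψ hinv hm).le
    · by_contra! hlt
      have hmem := int_mem_of_mem_uIcc_heightOver_map hper hψ hinv hF hinj hψc
        isPreconnected_Ico (a := m) (b := m + 1) (left_mem_Ico.2 (lt_add_one _)) ⟨hp.1, hm⟩
        (mem_uIcc.2 (Or.inl ⟨by rw [hcast]; exact (lt_add_one _).le, by rw [hcast]; exact hlt.le⟩))
      rw [hcast] at hmem
      exact right_notMem_Ico hmem

end invariantGraph

theorem tendsto_div_natCast_zero_of_abs_le {u : ℕ → ℝ} {C : ℝ} (hu : ∀ n, |u n| ≤ C) :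
    Tendsto (fun n : ℕ => u n / n) atTop (nhds 0) :=
  squeeze_zero_norm (fun n => by
      rw [Real.norm_eq_abs, abs_div, Nat.abs_cast]
      exact div_le_div_of_nonneg_right (hu n) n.cast_nonneg)
    (tendsto_const_div_atTop_nhds_zero_nat C)

theorem invariant_circle_forces_zero_vertical_rotation_general
    (F : ℝ × ℝ → ℝ × ℝ) (hF : Continuous F) (hFbij : Function.Bijective F)
    (l : ℤ) (hper2 : ∀ z : ℝ × ℝ, F (z + (0, 1)) = F z + ((l : ℝ), 1))
    (ψ : ℝ → ℝ) (hψ : Continuous ψ) (hψper : ∀ φ : ℝ, ψ (φ + 1) = ψ φ)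
    (hinv : F '' {p : ℝ × ℝ | p.2 = ψ p.1} = {p : ℝ × ℝ | p.2 = ψ p.1}) :
    ∀ z : ℝ × ℝ, ∀ ω : ℝ,
      Tendsto (fun n : ℕ => ((F^[n] z).2 - z.2) / (n : ℝ)) atTop (nhds ω) →
      ω = 0 := by
  intro z ω hω
  obtain ⟨M, hM⟩ := isBounded_iff_forall_norm_le.1
    ((show Periodic ψ 1 from hψper).isBounded_of_continuous one_ne_zero hψ)
  have hψM : ∀ x, |ψ x| ≤ M := fun x => hM _ (mem_range_self x)
  let m := ⌊heightOver ψ z⌋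
  have horbit : ∀ n, heightOver ψ (F^[n] z) ∈ Icc (m : ℝ) (m + 1) := fun n =>
    (mapsTo_heightOver_preimage_Icc hper2 hψper hinv hF hFbij.injective hψ m).iterate n
      ⟨Int.floor_le _, (Int.lt_floor_add_one _).le⟩
  have hdisp : ∀ n, |(F^[n] z).2 - z.2| ≤ 1 + 2 * M := fun n => by
    have hheight : |heightOver ψ (F^[n] z) - heightOver ψ z| ≤ 1 := by
      simpa [Real.dist_eq] using Real.dist_le_of_mem_Icc (horbit n) (horbit 0)
    calc |(F^[n] z).2 - z.2|
        = |(heightOver ψ (F^[n] z) - heightOver ψ z) + (ψ (F^[n] z).1 - ψ z.1)| := by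
          simp only [heightOver]; ring_nf
      _ ≤ 1 + (M + M) := (abs_add_le _ _).trans <|
          add_le_add hheight ((abs_sub _ _).trans (add_le_add (hψM _) (hψM _)))
      _ = 1 + 2 * M := by ring
  exact tendsto_nhds_unique hω (tendsto_div_natCast_zero_of_abs_le hdisp)

/-- If a lift `F` (to the plane) of a cylinder homeomorphism covering a torus
map homotopic to `[[1,1],[0,1]]` leaves invariant the lift of a rotational
invariant circle (a graph of a 1-periodic continuous function), then every
point has vertical rotation number `0` (whenever the limit exists); hence the
map cannot have both an orbit with nonzero vertical rotation number and one
with zero vertical rotation number. -/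
theorem invariant_circle_forces_zero_vertical_rotation
    (F : ℝ × ℝ → ℝ × ℝ) (hF : Continuous F) (hFbij : Function.Bijective F)
    (hper1 : ∀ z : ℝ × ℝ, F (z + (1, 0)) = F z + (1, 0))
    (l : ℤ) (hper2 : ∀ z : ℝ × ℝ, F (z + (0, 1)) = F z + ((l : ℝ), 1))
    (ψ : ℝ → ℝ) (hψ : Continuous ψ) (hψper : ∀ φ : ℝ, ψ (φ + 1) = ψ φ)
    (hinv : F '' {p : ℝ × ℝ | p.2 = ψ p.1} = {p : ℝ × ℝ | p.2 = ψ p.1}) :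
    ∀ z : ℝ × ℝ, ∀ ω : ℝ,
      Tendsto (fun n : ℕ => ((F^[n] z).2 - z.2) / (n : ℝ)) atTop (nhds ω) →
      ω = 0 :=
  invariant_circle_forces_zero_vertical_rotation_general F hF hFbij l hper2 ψ hψ hψper hinv
end
end
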